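/- Let P be a probability mass function on ℝ. Then the symmetry entropy satisfies Λ[P(Φ)] ≤ (1 − P(0)) · ln 2; equivalently, (1 − P(Φ = 0)) · ln 2 − Λ[P(Φ)] ≥ 0. -/

import Mathlib

open scoped BigOperators

/-- Shannon entropy of a pmf `P` on `ℝ` (convention `0 · ln 0 = 0` is automatic
since `Real.log 0 = 0`). -/
noncomputable def shannonEntropy (P : ℝ → ℝ) : ℝ :=
  -∑' φ : ℝ, P φ * Real.log (P φ)

/-- Shannon entropy of the absolute-value distribution `P(|Φ|)`. -/
noncomputable def absEntropy (P : ℝ → ℝ) : ℝ :=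
  -(∑' φ : Set.Ioi (0 : ℝ), (P ↑φ + P (-(φ : ℝ))) * Real.log (P ↑φ + P (-(φ : ℝ))))
    - P 0 * Real.log (P 0)

/-- Symmetry entropy `Λ[P(Φ)] = H[P(Φ)] − H[P(|Φ|)]`. -/
noncomputable def symmetryEntropy (P : ℝ → ℝ) : ℝ :=
  shannonEntropy P - absEntropy P

/-- The negation equivalence between positive and negative reals. -/
def negIoiEquiv : Set.Ioi (0 : ℝ) ≃ Set.Iio (0 : ℝ) where
  toFun x := ⟨-x.1, Set.mem_Iio.mpr (neg_lt_zero.mpr x.2)⟩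
  invFun x := ⟨-x.1, Set.mem_Ioi.mpr (neg_pos.mpr x.2)⟩
  left_inv x := by ext; simp
  right_inv x := by ext; simp

lemma summable_neg_Ioi {g : ℝ → ℝ} (hg : Summable g) :
    Summable (fun x : Set.Ioi (0 : ℝ) => g (-(x : ℝ))) :=
  (Equiv.summable_iff negIoiEquiv (f := fun y : Set.Iio (0 : ℝ) => g ↑y)).mpr
    (hg.subtype _)

lemma tsum_split_zero (g : ℝ → ℝ) (hg : Summable g) :
    ∑' x : ℝ, g x = g 0 + ∑' x : Set.Ioi (0 : ℝ), (g ↑x + g (-(x : ℝ))) := by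
  have h1 := Summable.tsum_subtype_add_tsum_subtype_compl hg {0}
  have h0 : (∑' x : ({(0 : ℝ)} : Set ℝ), g ↑x) = g 0 := tsum_singleton 0 g
  have hneg : (∑' x : Set.Iio (0 : ℝ), g ↑x)
      = ∑' x : Set.Ioi (0 : ℝ), g (-(x : ℝ)) :=
    (Equiv.tsum_eq negIoiEquiv (fun y : Set.Iio (0 : ℝ) => g ↑y)).symm
  have hdisj : Disjoint (Set.Iio (0 : ℝ)) (Set.Ioi (0 : ℝ)) := by
    rw [Set.disjoint_left]; rintro x hx hx'
    simp only [Set.mem_Iio] at hx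
    simp only [Set.mem_Ioi] at hx'
    linarith
  have hgI : Summable (fun x : Set.Ioi (0 : ℝ) => g ↑x) := hg.subtype _
  have hcompl : (∑' x : (({(0 : ℝ)}ᶜ : Set ℝ)), g ↑x)
      = ∑' x : Set.Ioi (0 : ℝ), (g ↑x + g (-(x : ℝ))) := by
    rw [← Set.Iio_union_Ioi,
      Summable.tsum_union_disjoint hdisj (hg.subtype _) (hg.subtype _),
      hneg, add_comm, ← Summable.tsum_add hgI (summable_neg_Ioi hg)]
  rw [h0, hcompl] at h1
  linarith

lemma key_ineq (a b : ℝ) (ha : 0 ≤ a) (hb : 0 ≤ b) :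
    (a + b) * Real.log (a + b) - (a * Real.log a + b * Real.log b)
      ≤ (a + b) * Real.log 2 := by
  rcases eq_or_lt_of_le (add_nonneg ha hb) with hs | hs
  · have ha0 : a = 0 := by linarith
    have hb0 : b = 0 := by linarith
    simp [ha0, hb0]
  · have hc := Real.convexOn_mul_log.2 (Set.mem_Ici.mpr ha) (Set.mem_Ici.mpr hb)
      (by norm_num : (0:ℝ) ≤ 1/2) (by norm_num : (0:ℝ) ≤ 1/2) (by norm_num)
    simp only [smul_eq_mul] at hc
    have hhalf : (1/2 : ℝ) * a + (1/2 : ℝ) * b = (a + b) / 2 := by ring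
    rw [hhalf] at hc
    have hlog : Real.log ((a + b) / 2) = Real.log (a + b) - Real.log 2 :=
      Real.log_div hs.ne' two_ne_zero
    rw [hlog] at hc
    nlinarith [hc]

/-- for any pmf `P` on `ℝ`, the symmetry entropy satisfies
`Λ[P(Φ)] ≤ (1 − P(0)) · ln 2`. -/
theorem symmetryEntropy_le
    (P : ℝ → ℝ) (hP : ∀ φ, 0 ≤ P φ) (hPsummable : Summable P)
    (hPsum : ∑' φ : ℝ, P φ = 1)
    (hH : Summable (fun φ : ℝ => P φ * Real.log (P φ)))
    (hHabs : Summable (fun φ : Set.Ioi (0 : ℝ) =>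
      (P ↑φ + P (-(φ : ℝ))) * Real.log (P ↑φ + P (-(φ : ℝ))))) :
    symmetryEntropy P ≤ (1 - P 0) * Real.log 2 := by
  have hA : Summable (fun x : Set.Ioi (0 : ℝ) => P ↑x * Real.log (P ↑x)) :=
    hH.subtype _
  have hB : Summable (fun x : Set.Ioi (0 : ℝ) => P (-(x : ℝ)) * Real.log (P (-(x : ℝ)))) :=
    summable_neg_Ioi hH
  have hPA : Summable (fun x : Set.Ioi (0 : ℝ) => P ↑x) := hPsummable.subtype _
  have hPB : Summable (fun x : Set.Ioi (0 : ℝ) => P (-(x : ℝ))) :=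
    summable_neg_Ioi hPsummable
  have hsplitH := tsum_split_zero (fun φ => P φ * Real.log (P φ)) hH
  have hsplitP := tsum_split_zero P hPsummable
  rw [hPsum] at hsplitP
  have hPsumIoi : (∑' x : Set.Ioi (0 : ℝ), (P ↑x + P (-(x : ℝ)))) = 1 - P 0 := by
    rw [Summable.tsum_add hPA hPB] at hsplitP ⊢
    linarith
  have hsum_fs : (∑' x : Set.Ioi (0 : ℝ),
      (P ↑x * Real.log (P ↑x) + P (-(x : ℝ)) * Real.log (P (-(x : ℝ)))))
      = ∑' x : Set.Ioi (0 : ℝ), P ↑x * Real.log (P ↑x)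
        + ∑' x : Set.Ioi (0 : ℝ), P (-(x : ℝ)) * Real.log (P (-(x : ℝ))) :=
    Summable.tsum_add hA hB
  have hmain : symmetryEntropy P
      = ∑' x : Set.Ioi (0 : ℝ),
          ((P ↑x + P (-(x : ℝ))) * Real.log (P ↑x + P (-(x : ℝ)))
            - (P ↑x * Real.log (P ↑x) + P (-(x : ℝ)) * Real.log (P (-(x : ℝ))))) := by
    rw [Summable.tsum_sub hHabs (hA.add hB)]
    simp only [symmetryEntropy, shannonEntropy, absEntropy]
    rw [hsplitH, hsum_fs]
    ring
  rw [hmain, ← hPsumIoi, ← tsum_mul_right]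
  exact Summable.tsum_le_tsum
    (fun x => key_ineq (P ↑x) (P (-(x : ℝ))) (hP _) (hP _))
    (hHabs.sub (hA.add hB))
    ((hPA.add hPB).mul_right _)
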